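/- Let (T, J) be an ℕ-pair with both T and J nonsingleton (equivalently, T ≠ {0} and J ≠ {0}). Then there exists an integer p ≥ 2 and an ℕ-pair (A, B) such that either T = pA and J = {0,1,…,p−1} ⊕ pB, or J = pA and T = {0,1,…,p−1} ⊕ pB. (Stated without the nontriviality assumption: for every ℕ-pair (T,J) there exist p ≥ 2 and an ℕ-pair (A,B) with T = pA, J = {0,…,p−1} ⊕ pB, or the roles of T and J reversed.) -/

import Mathlib

/-!
Assume `1 ∈ J` (otherwise swap `T` and `J`) and let `p` be the least positive element of `T`,
so that `[0, p) ⊆ J`. The key observation is that for `m ∈ J` and `0 < r < p` the sums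
`(m + r) + (p - r) = p + m` show that `m + r ∉ T` once `m ≥ p`. A strong induction then shows that
`T ⊆ pℕ` and that `J` is a union of blocks `[pq, pq + p)`; dividing by `p` yields the pair `(A, B)`.
If `T = {0}` then `J = ℕ` and any `p` works.
-/

open Pointwise

/-- Unique decompositions: every sum `a + b` with `a ∈ A`, `b ∈ B` determines `a` and `b`. -/
def UniqueSumsOn {α : Type*} [Add α] (A B : Set α) : Prop :=
  ∀ a ∈ A, ∀ b ∈ B, ∀ a' ∈ A, ∀ b' ∈ B, a + b = a' + b' → a = a' ∧ b = b'

/-- `C = A ⊕ B`: `C` is the direct sum of `A` and `B`. -/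
def IsDirectSum {α : Type*} [Add α] (A B C : Set α) : Prop :=
  C = A + B ∧ UniqueSumsOn A B

open Set

theorem uniqueSumsOn_Iio_image_mul (p : ℕ) (B : Set ℕ) :
    UniqueSumsOn (Iio p) ((p * ·) '' B) := by
  rintro r (hr : r < p) _ ⟨b, -, rfl⟩ r' (hr' : r' < p) _ ⟨b', -, rfl⟩ e
  have hrr : r = r' := by
    rw [← Nat.mod_eq_of_lt hr, ← Nat.mod_eq_of_lt hr', ← Nat.add_mul_mod_self_left r p b, e,
      Nat.add_mul_mod_self_left]
  subst hrr
  exact ⟨rfl, by omega⟩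

theorem isDirectSum_Iio_image_mul_preimage {J : Set ℕ} {p : ℕ} (hp : 0 < p)
    (hJ : ∀ n ∈ J, ∀ r < p, p * (n / p) + r ∈ J) :
    IsDirectSum (Iio p) ((p * ·) '' ((p * ·) ⁻¹' J)) J := by
  refine ⟨Set.ext fun n => ⟨fun hn => ?_, ?_⟩, uniqueSumsOn_Iio_image_mul p _⟩
  · refine ⟨n % p, Nat.mod_lt n hp, p * (n / p), ⟨n / p, ?_, rfl⟩, ?_⟩
    · simpa only [mem_preimage, add_zero] using hJ n hn 0 hp
    · exact (add_comm _ _).trans (Nat.div_add_mod n p)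
  · rintro ⟨r, hr, _, ⟨b, hb, rfl⟩, rfl⟩
    change r + p * b ∈ J
    rw [add_comm, ← Nat.mul_div_cancel_left b hp]
    exact hJ _ hb r hr

namespace IsDirectSum

theorem exists_add_eq {α : Type*} [Add α] {A B C : Set α} (h : IsDirectSum A B C) {x : α}
    (hx : x ∈ C) : ∃ a ∈ A, ∃ b ∈ B, a + b = x := by
  rw [h.1] at hx
  exact hx

theorem symm {α : Type*} [AddCommSemigroup α] {A B C : Set α} (h : IsDirectSum A B C) :
    IsDirectSum B A C :=
  ⟨h.1.trans (add_comm A B), fun b hb a ha b' hb' a' ha' e =>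
    (h.2 a ha b hb a' ha' b' hb' (by rw [add_comm a, add_comm a', e])).symm⟩

variable {T J : Set ℕ}

theorem zero_mem_left (h : IsDirectSum T J univ) : 0 ∈ T := by
  obtain ⟨t, ht, j, -, htj⟩ := h.exists_add_eq (mem_univ 0)
  rwa [Nat.eq_zero_of_add_eq_zero_right htj] at ht

theorem zero_mem_right (h : IsDirectSum T J univ) : 0 ∈ J := h.symm.zero_mem_left

theorem eq_zero_of_mem_left_of_mem_right (h : IsDirectSum T J univ) {n : ℕ} (hT : n ∈ T)
    (hJ : n ∈ J) : n = 0 :=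
  (h.2 n hT 0 h.zero_mem_right 0 h.zero_mem_left n hJ (by rw [add_zero, zero_add])).1

theorem right_eq_univ (h : IsDirectSum T J univ) (hT : ∀ t ∈ T, t = 0) : J = univ := by
  refine eq_univ_of_forall fun n => ?_
  obtain ⟨t, ht, j, hj, htj⟩ := h.exists_add_eq (mem_univ n)
  rwa [← htj, hT t ht, zero_add]

section LeastPositive

variable {p : ℕ}

theorem mem_right_of_lt (h : IsDirectSum T J univ) (hgap : ∀ t ∈ T, t < p → t = 0) {m : ℕ}
    (hm : m < p) : m ∈ J := by
  obtain ⟨t, ht, j, hj, htj⟩ := h.exists_add_eq (mem_univ m)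
  rwa [← htj, hgap t ht (by omega), zero_add]

/-- Compare `(m + r) + (p - r)` with `p + m`. -/
theorem add_eq_of_add_mem_left (h : IsDirectSum T J univ) (hpT : p ∈ T)
    (hgap : ∀ t ∈ T, t < p → t = 0) {m r : ℕ} (hm : m ∈ J) (hr : 0 < r) (hrp : r < p)
    (hmr : m + r ∈ T) : m + r = p :=
  (h.2 _ hmr (p - r) (h.mem_right_of_lt hgap (by omega)) p hpT m hm (by omega)).1

theorem exists_add_eq_of_dvd (h : IsDirectSum T J univ) {n M : ℕ}
    (ihT : ∀ m < n, m ∈ T → p ∣ m) (ihJ : ∀ m < n, m ∈ J → ∀ r < p, p * (m / p) + r ∈ J)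
    (hM : p ∣ M) (hMn : M < n) : ∃ t ∈ T, ∃ j ∈ J, t + j = M ∧ ∀ r < p, j + r ∈ J := by
  obtain ⟨t, ht, j, hj, htj⟩ := h.exists_add_eq (mem_univ M)
  have hpj : p ∣ j := (Nat.dvd_add_right (ihT t (by omega) ht)).mp (htj ▸ hM)
  refine ⟨t, ht, j, hj, htj, fun r hr => ?_⟩
  simpa only [Nat.mul_div_cancel' hpj] using ihJ j (by omega) hj r hr

theorem add_mem_right_of_dvd (h : IsDirectSum T J univ) (hp : 0 < p) (hpT : p ∈ T)
    (hgap : ∀ t ∈ T, t < p → t = 0) {n r : ℕ} (ihT : ∀ m < n, m ∈ T → p ∣ m)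
    (ihJ : ∀ m < n, m ∈ J → ∀ r < p, p * (m / p) + r ∈ J) (hnJ : n ∈ J) (hpn : p ∣ n)
    (hr : r < p) : n + r ∈ J := by
  obtain ⟨t, ht, j, hj, htj⟩ := h.exists_add_eq (mem_univ (n + r))
  obtain rfl | htpos := Nat.eq_zero_or_pos t
  · rwa [← htj, zero_add]
  exfalso
  rcases lt_or_ge t n with htn | hnt
  · -- `t = p a` with `0 < a`, so `n - t ∈ J` and `t + (n - t) = 0 + n` forces `t = 0`.
    obtain ⟨a, rfl⟩ := ihT t htn ht
    obtain ⟨c, hc⟩ : p ∣ n - p * a := Nat.dvd_sub hpn (dvd_mul_right p a)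
    have hpa : p ≤ p * a := Nat.le_mul_of_pos_right p (Nat.pos_of_mul_pos_left htpos)
    have hcJ : p * c ∈ J := by
      have hjc : j = p * c + r := by omega
      have := ihJ j (by omega) hj 0 hp
      rwa [hjc, Nat.mul_add_div hp, Nat.div_eq_of_lt hr, add_zero, add_zero] at this
    have := h.2 (p * a) ht (p * c) hcJ 0 h.zero_mem_left n hnJ (by omega)
    omega
  · rcases Nat.eq_zero_or_pos n with rfl | hnpos
    · exact htpos.ne' (hgap t ht (by omega))
    have hpn' : p ≤ n := Nat.le_of_dvd hnpos hpn
    rcases hnt.eq_or_lt with rfl | hnt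
    · exact htpos.ne' (h.eq_zero_of_mem_left_of_mem_right ht hnJ)
    · have := h.add_eq_of_add_mem_left hpT hgap hnJ (r := t - n) (by omega) (by omega)
        (by rwa [Nat.add_sub_cancel' hnt.le])
      omega

theorem dvd_and_block_mem (h : IsDirectSum T J univ) (hp : 0 < p) (hpT : p ∈ T)
    (hgap : ∀ t ∈ T, t < p → t = 0) (n : ℕ) :
    (n ∈ T → p ∣ n) ∧ (n ∈ J → ∀ r < p, p * (n / p) + r ∈ J) := by
  induction n using Nat.strong_induction_on with
  | _ n ih =>
  have ihT := fun m hm => (ih m hm).1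
  have ihJ := fun m hm => (ih m hm).2
  rcases Nat.eq_zero_or_pos (n % p) with hs | hs
  · have hpn : p ∣ n := Nat.dvd_of_mod_eq_zero hs
    refine ⟨fun _ => hpn, fun hnJ r hr => ?_⟩
    rw [Nat.mul_div_cancel' hpn]
    exact h.add_mem_right_of_dvd hp hpT hgap ihT ihJ hnJ hpn hr
  · -- `n = t + (j + n % p)` is the decomposition of `n`.
    have hn := Nat.div_add_mod n p
    obtain ⟨t, ht, j, hj, htj, hblock⟩ :=
      h.exists_add_eq_of_dvd ihT ihJ (dvd_mul_right p (n / p)) (by omega)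
    have hjs : j + n % p ∈ J := hblock _ (Nat.mod_lt n hp)
    refine ⟨fun hnT => ?_, fun hnJ r hr => ?_⟩
    · have := h.2 n hnT 0 h.zero_mem_right t ht _ hjs (by omega)
      omega
    · have := h.2 0 h.zero_mem_left n hnJ t ht _ hjs (by omega)
      have hjn : j = p * (n / p) := by omega
      exact hjn ▸ hblock r hr

end LeastPositive

theorem preimage_mul (h : IsDirectSum T J univ) {p : ℕ} (hp : 0 < p) (hT : ∀ t ∈ T, p ∣ t) :
    IsDirectSum ((p * ·) ⁻¹' T) ((p * ·) ⁻¹' J) univ := by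
  refine ⟨(eq_univ_of_forall fun m => ?_).symm, fun a ha b hb a' ha' b' hb' e => ?_⟩
  · obtain ⟨t, ht, j, hj, htj⟩ := h.exists_add_eq (mem_univ (p * m))
    obtain ⟨a, rfl⟩ := hT t ht
    obtain ⟨b, rfl⟩ : p ∣ j := (Nat.dvd_add_right (dvd_mul_right p a)).mp (htj ▸ dvd_mul_right p m)
    exact ⟨a, ht, b, hj, Nat.eq_of_mul_eq_mul_left hp (by rw [mul_add, htj])⟩
  · obtain ⟨haa, hbb⟩ := h.2 _ ha _ hb _ ha' _ hb' (by rw [← mul_add, ← mul_add, e])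
    exact ⟨Nat.eq_of_mul_eq_mul_left hp haa, Nat.eq_of_mul_eq_mul_left hp hbb⟩

theorem exists_dvd_and_block_mem_of_one_mem_right (h : IsDirectSum T J univ) (h1 : 1 ∈ J) :
    ∃ p, 2 ≤ p ∧ (∀ t ∈ T, p ∣ t) ∧ ∀ n ∈ J, ∀ r < p, p * (n / p) + r ∈ J := by
  classical
  by_cases hT : ∃ t, 0 < t ∧ t ∈ T
  · have hpos : 0 < Nat.find hT := (Nat.find_spec hT).1
    have hpT : Nat.find hT ∈ T := (Nat.find_spec hT).2
    have hgap : ∀ t ∈ T, t < Nat.find hT → t = 0 := fun t ht htp =>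
      Nat.eq_zero_of_not_pos fun htpos => Nat.find_min hT htp ⟨htpos, ht⟩
    have hp1 : Nat.find hT ≠ 1 := fun hp1 =>
      one_ne_zero (h.eq_zero_of_mem_left_of_mem_right (hp1 ▸ hpT) h1)
    exact ⟨Nat.find hT, by omega, fun t ht => (h.dvd_and_block_mem hpos hpT hgap t).1 ht,
      fun n hn => (h.dvd_and_block_mem hpos hpT hgap n).2 hn⟩
  · have hT0 : ∀ t ∈ T, t = 0 := fun t ht => Nat.eq_zero_of_not_pos fun htpos => hT ⟨t, htpos, ht⟩
    exact ⟨2, le_rfl, fun t ht => hT0 t ht ▸ dvd_zero 2,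
      fun _ _ _ _ => h.right_eq_univ hT0 ▸ mem_univ _⟩

theorem exists_of_one_mem_right (h : IsDirectSum T J univ) (h1 : 1 ∈ J) :
    ∃ p : ℕ, 2 ≤ p ∧ ∃ A B : Set ℕ, IsDirectSum A B univ ∧
      T = (p * ·) '' A ∧ IsDirectSum (Iio p) ((p * ·) '' B) J := by
  obtain ⟨p, hp2, hT, hJ⟩ := h.exists_dvd_and_block_mem_of_one_mem_right h1
  have hp : 0 < p := by omega
  refine ⟨p, hp2, _, _, h.preimage_mul hp hT, ?_, isDirectSum_Iio_image_mul_preimage hp hJ⟩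
  refine (image_preimage_eq_of_subset fun t ht => ?_).symm
  obtain ⟨a, rfl⟩ := hT t ht
  exact ⟨a, rfl⟩

end IsDirectSum

theorem stmt11 (T J : Set ℕ) (h : IsDirectSum T J Set.univ) :
    ∃ p : ℕ, 2 ≤ p ∧ ∃ A B : Set ℕ, IsDirectSum A B Set.univ ∧
      ((T = (p * ·) '' A ∧ IsDirectSum (Set.Iio p) ((p * ·) '' B) J) ∨
       (J = (p * ·) '' A ∧ IsDirectSum (Set.Iio p) ((p * ·) '' B) T)) := by
  obtain ⟨t, ht, j, hj, htj⟩ := h.exists_add_eq (mem_univ 1)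
  rcases Nat.add_eq_one_iff.mp htj with ⟨rfl, rfl⟩ | ⟨rfl, rfl⟩
  · obtain ⟨p, hp, A, B, hAB, hT, hJ⟩ := h.exists_of_one_mem_right hj
    exact ⟨p, hp, A, B, hAB, Or.inl ⟨hT, hJ⟩⟩
  · obtain ⟨p, hp, A, B, hAB, hJ, hT⟩ := h.symm.exists_of_one_mem_right ht
    exact ⟨p, hp, A, B, hAB, Or.inr ⟨hJ, hT⟩⟩
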